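/- Consider the elastic von Karman beam system on [L₀,L]×[0,T+h] and its time-difference (u_d, v_d) with step h, and let M > 0. Set σ₀ = (L − L₀)T²/4, φ(x,t) = (L − x)T² − 5(L − L₀)(t − T/2)², and for τ ≥ 1 define H_d(t) = ∫_{L₀}^{L} (β₂ u_dt u_dx + ρ₂ v_dt v_dx) e^{τφ(x,t)}(L − x) dx + μ₂ ∫_{L₀}^{L} u_dtx u_dxx e^{τφ(x,t)}(L − x) dx + β₂ ∫_{L₀}^{L} u_dt² e^{τφ(x,t)}[τT²(L − x) + 1] dx + μ₂ τT² ∫_{L₀}^{L} u_dtx u_d e^{τφ(x,t)}[τT²(L − x) + 2] dx. Assume u_d(L₀,t) = u_dx(L₀,t) = v_d(L₀,t) = 0 for t ∈ [0,T]. Then there exists C₃ > 0, depending only on β₂, μ₂, λ₂, ρ₂, L₀, L, T, h, M, such that for every M-bounded solution (u,v) and every τ ≥ 1: H_d(0) − H_d(T) ≥ −C₃ (E_d(T) + E_d(0)) τ² e^{−τσ₀}. -/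

import Mathlib

open MeasureTheory

noncomputable section

/-- Partial derivative in the first (space) variable. -/
def pdx (f : ℝ → ℝ → ℝ) : ℝ → ℝ → ℝ := fun x t => deriv (fun y => f y t) x

/-- Partial derivative in the second (time) variable. -/
def pdt (f : ℝ → ℝ → ℝ) : ℝ → ℝ → ℝ := fun x t => deriv (fun s => f x s) t

/-- Time difference with step `h`. -/
def tdiff (h : ℝ) (f : ℝ → ℝ → ℝ) : ℝ → ℝ → ℝ := fun x t => f x (t + h) - f x t

/-- The elastic full von Karman beam system on `[L₀,L] × [0,Th]`. -/
def VKBeam (β₂ μ₂ lam₂ ρ₂ L₀ L Th : ℝ) (u v : ℝ → ℝ → ℝ) : Prop :=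
  ∀ x ∈ Set.Icc L₀ L, ∀ t ∈ Set.Icc (0:ℝ) Th,
    β₂ * pdt (pdt u) x t - μ₂ * pdx (pdx (pdt (pdt u))) x t
        + lam₂ * pdx (pdx (pdx (pdx u))) x t
        - pdx (fun y s => pdx u y s * (pdx v y s + (pdx u y s) ^ 2 / 2)) x t = 0 ∧
    ρ₂ * pdt (pdt v) x t - pdx (fun y s => pdx v y s + (pdx u y s) ^ 2 / 2) x t = 0

/-- `f` has all partial derivatives of order at most 4 bounded by `M` on
`[L₀,L] × [0,Th]`. -/
def MBounded (M L₀ L Th : ℝ) (f : ℝ → ℝ → ℝ) : Prop :=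
  ∀ k : ℕ, k ≤ 4 → ∀ x ∈ Set.Icc L₀ L, ∀ t ∈ Set.Icc (0:ℝ) Th,
    ‖iteratedFDeriv ℝ k (Function.uncurry f) (x, t)‖ ≤ M

/-- Energy of the time difference `(u_d, v_d)`. -/
def Ed (β₂ μ₂ lam₂ ρ₂ L₀ L h : ℝ) (u v : ℝ → ℝ → ℝ) (t : ℝ) : ℝ :=
  (1 / 2) * (β₂ * (∫ x in L₀..L, (pdt (tdiff h u) x t) ^ 2)
    + μ₂ * (∫ x in L₀..L, (pdx (pdt (tdiff h u)) x t) ^ 2)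
    + lam₂ * (∫ x in L₀..L, (pdx (pdx (tdiff h u)) x t) ^ 2)
    + (∫ x in L₀..L, (pdx (tdiff h v) x t
        + (1 / 2) * pdx (tdiff h u) x t * (pdx u x (t + h) + pdx u x t)) ^ 2)
    + ρ₂ * (∫ x in L₀..L, (pdt (tdiff h v) x t) ^ 2))

/-- The multiplier weight `φ(x,t) = (L − x)T² − 5(L − L₀)(t − T/2)²`. -/
def phiW (L₀ L T : ℝ) : ℝ → ℝ → ℝ := fun x t =>
  (L - x) * T ^ 2 - 5 * (L - L₀) * (t - T / 2) ^ 2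

/-- The boundary-in-time functional `H_d(t)` from the multiplier estimate. -/
def Hd (β₂ μ₂ ρ₂ L₀ L T h τ : ℝ) (u v : ℝ → ℝ → ℝ) (t : ℝ) : ℝ :=
  (∫ x in L₀..L,
      (β₂ * pdt (tdiff h u) x t * pdx (tdiff h u) x t
        + ρ₂ * pdt (tdiff h v) x t * pdx (tdiff h v) x t)
        * Real.exp (τ * phiW L₀ L T x t) * (L - x))
  + μ₂ * (∫ x in L₀..L,
      pdx (pdt (tdiff h u)) x t * pdx (pdx (tdiff h u)) x t
        * Real.exp (τ * phiW L₀ L T x t) * (L - x))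
  + β₂ * (∫ x in L₀..L,
      (pdt (tdiff h u) x t) ^ 2
        * Real.exp (τ * phiW L₀ L T x t) * (τ * T ^ 2 * (L - x) + 1))
  + μ₂ * τ * T ^ 2 * (∫ x in L₀..L,
      pdx (pdt (tdiff h u)) x t * tdiff h u x t
        * Real.exp (τ * phiW L₀ L T x t) * (τ * T ^ 2 * (L - x) + 2))

end

/-! At `t = 0` and `t = T` the weight is `φ(x, t) = (L - x)T² - 5(L - L₀)T²/4 ≤ -σ₀`, so every
integrand of `H_d(t)` is at most `τ² e^{-τσ₀}` times a fixed multiple of the density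
`u_d² + u_dx² + u_dxx² + u_dt² + u_dtx² + v_dt² + v_dx²`. The energy `E_d(t)` controls the
integral of this density: directly for `u_dt`, `u_dtx`, `u_dxx`, `v_dt`; through the Poincaré
inequality from the clamped end `x = L₀` for `u_dx` and `u_d`; and for `v_dx` through the
nonlinear term of `E_d`, since `|u_x| ≤ M`. Hence `|H_d(0)|` and `|H_d(T)|` are both bounded by
`C₃ E_d τ² e^{-τσ₀}`. -/

open scoped ContDiff
open Function Set

section Slices

variable {F : ℝ → ℝ → ℝ}

theorem pdx_eq_fderiv (hF : Differentiable ℝ (uncurry F)) (x t : ℝ) :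
    pdx F x t = fderiv ℝ (uncurry F) (x, t) (1, 0) := by
  have h := (hF (x, t)).hasFDerivAt.comp_hasDerivAt x
    ((hasDerivAt_id x).prodMk (hasDerivAt_const x t))
  exact h.deriv

theorem pdt_eq_fderiv (hF : Differentiable ℝ (uncurry F)) (x t : ℝ) :
    pdt F x t = fderiv ℝ (uncurry F) (x, t) (0, 1) := by
  have h := (hF (x, t)).hasFDerivAt.comp_hasDerivAt t
    ((hasDerivAt_const t x).prodMk (hasDerivAt_id t))
  exact h.deriv

theorem hasDerivAt_pdx (hF : Differentiable ℝ (uncurry F)) (x t : ℝ) :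
    HasDerivAt (fun y => F y t) (pdx F x t) x :=
  (show Differentiable ℝ fun y => F y t from
    hF.comp (differentiable_id.prodMk (differentiable_const t))) x |>.hasDerivAt

theorem ContDiff.uncurry_pdx (hF : ContDiff ℝ ∞ (uncurry F)) :
    ContDiff ℝ ∞ (uncurry (pdx F)) := by
  have hF' := hF.differentiable (by simp)
  simpa only [uncurry_def, pdx_eq_fderiv hF'] using
    (hF.fderiv_right le_rfl).clm_apply contDiff_const

theorem ContDiff.uncurry_pdt (hF : ContDiff ℝ ∞ (uncurry F)) :
    ContDiff ℝ ∞ (uncurry (pdt F)) := by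
  have hF' := hF.differentiable (by simp)
  simpa only [uncurry_def, pdt_eq_fderiv hF'] using
    (hF.fderiv_right le_rfl).clm_apply contDiff_const

theorem ContDiff.uncurry_tdiff (hF : ContDiff ℝ ∞ (uncurry F)) (h : ℝ) :
    ContDiff ℝ ∞ (uncurry (tdiff h F)) :=
  (hF.comp (contDiff_fst.prodMk (contDiff_snd.add contDiff_const))).sub hF

theorem abs_pdx_le_norm_iteratedFDeriv_one (hF : Differentiable ℝ (uncurry F)) (x t : ℝ) :
    |pdx F x t| ≤ ‖iteratedFDeriv ℝ 1 (uncurry F) (x, t)‖ := by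
  rw [norm_iteratedFDeriv_one, pdx_eq_fderiv hF, ← Real.norm_eq_abs]
  simpa using (fderiv ℝ (uncurry F) (x, t)).le_opNorm (1, 0)

end Slices

theorem MBounded.abs_pdx_le {M L₀ L Th : ℝ} {F : ℝ → ℝ → ℝ} (hM : MBounded M L₀ L Th F)
    (hF : Differentiable ℝ (uncurry F)) {x t : ℝ} (hx : x ∈ Icc L₀ L) (ht : t ∈ Icc 0 Th) :
    |pdx F x t| ≤ M :=
  (abs_pdx_le_norm_iteratedFDeriv_one hF x t).trans (hM 1 (by norm_num) x hx t ht)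

theorem integral_sq_le_of_hasDerivAt_of_left_eq_zero {a b : ℝ} {g g' : ℝ → ℝ} (hab : a ≤ b)
    (hg : ∀ x, HasDerivAt g (g' x) x) (hg' : Continuous g') (ha : g a = 0) :
    ∫ x in a..b, g x ^ 2 ≤ 4 * (b - a) ^ 2 * ∫ x in a..b, g' x ^ 2 := by
  rcases hab.eq_or_lt with rfl | hlt
  · simp
  set ℓ := b - a
  have hℓ : 0 < ℓ := sub_pos.2 hlt
  have hgc : Continuous g := continuous_iff_continuousAt.2 fun x => (hg x).continuousAt
  -- `g x ^ 2 = ∫ₐˣ 2 g g'` and `2 g g' ≤ g² / (2ℓ) + 2ℓ g'²`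
  have hpt : ∀ x ∈ Icc a b,
      g x ^ 2 ≤ ∫ y in a..b, (g y ^ 2 / (2 * ℓ) + 2 * ℓ * g' y ^ 2) := by
    intro x hx
    have hftc : ∫ y in a..x, 2 * g y * g' y = g x ^ 2 := by
      rw [intervalIntegral.integral_eq_sub_of_hasDerivAt (f := fun y => g y ^ 2)
        (fun y _ => by simpa [mul_comm, mul_left_comm] using (hg y).fun_pow 2)
        ((Continuous.intervalIntegrable (by fun_prop) _ _)), ha]
      ring
    rw [← hftc]
    calc ∫ y in a..x, 2 * g y * g' y
        ≤ ∫ y in a..x, (g y ^ 2 / (2 * ℓ) + 2 * ℓ * g' y ^ 2) := by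
          refine intervalIntegral.integral_mono_on hx.1
            (Continuous.intervalIntegrable (by fun_prop) _ _)
            (Continuous.intervalIntegrable (by fun_prop) _ _) fun y _ => ?_
          have : 0 ≤ (g y - 2 * ℓ * g' y) ^ 2 / (2 * ℓ) := by positivity
          field_simp at this ⊢
          nlinarith [this]
      _ ≤ ∫ y in a..b, (g y ^ 2 / (2 * ℓ) + 2 * ℓ * g' y ^ 2) :=
          intervalIntegral.integral_mono_interval le_rfl hx.1 hx.2
            (.of_forall fun y => by positivity) (Continuous.intervalIntegrable (by fun_prop) _ _)
  have hsplit : ℓ * ∫ y in a..b, (g y ^ 2 / (2 * ℓ) + 2 * ℓ * g' y ^ 2) =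
      (∫ y in a..b, g y ^ 2) / 2 + 2 * ℓ ^ 2 * ∫ y in a..b, g' y ^ 2 := by
    rw [intervalIntegral.integral_add (Continuous.intervalIntegrable (by fun_prop) _ _)
      (Continuous.intervalIntegrable (by fun_prop) _ _),
      intervalIntegral.integral_div, intervalIntegral.integral_const_mul]
    field_simp
  have hle := intervalIntegral.integral_mono_on (μ := MeasureTheory.volume) hab
    (Continuous.intervalIntegrable (by fun_prop) _ _) intervalIntegrable_const hpt
  rw [intervalIntegral.integral_const, smul_eq_mul, hsplit] at hle
  linarith

theorem integral_sq_le_two_mul_integral_sq_add {a b M : ℝ} {s w m : ℝ → ℝ} (hab : a ≤ b)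
    (hs : Continuous s) (hw : Continuous w) (hm : Continuous m)
    (hmM : ∀ x ∈ Icc a b, |m x| ≤ 2 * M) :
    ∫ x in a..b, s x ^ 2 ≤
      2 * (∫ x in a..b, (s x + 1 / 2 * w x * m x) ^ 2) + 2 * M ^ 2 * ∫ x in a..b, w x ^ 2 := by
  have hpt : ∀ x ∈ Icc a b,
      s x ^ 2 ≤ 2 * (s x + 1 / 2 * w x * m x) ^ 2 + 2 * M ^ 2 * w x ^ 2 := by
    intro x hx
    have hm2 : m x ^ 2 ≤ (2 * M) ^ 2 := sq_le_sq' (abs_le.1 (hmM x hx)).1 (abs_le.1 (hmM x hx)).2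
    nlinarith [sq_nonneg (s x + w x * m x), mul_le_mul_of_nonneg_left hm2 (sq_nonneg (w x))]
  calc ∫ x in a..b, s x ^ 2
      ≤ ∫ x in a..b, (2 * (s x + 1 / 2 * w x * m x) ^ 2 + 2 * M ^ 2 * w x ^ 2) :=
        intervalIntegral.integral_mono_on hab (Continuous.intervalIntegrable (by fun_prop) _ _)
          (Continuous.intervalIntegrable (by fun_prop) _ _) hpt
    _ = _ := by
        rw [intervalIntegral.integral_add (Continuous.intervalIntegrable (by fun_prop) _ _)
          (Continuous.intervalIntegrable (by fun_prop) _ _),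
          intervalIntegral.integral_const_mul, intervalIntegral.integral_const_mul]

noncomputable def diffDensity (h : ℝ) (u v : ℝ → ℝ → ℝ) (x t : ℝ) : ℝ :=
  tdiff h u x t ^ 2 + pdx (tdiff h u) x t ^ 2 + pdx (pdx (tdiff h u)) x t ^ 2
    + pdt (tdiff h u) x t ^ 2 + pdx (pdt (tdiff h u)) x t ^ 2
    + pdt (tdiff h v) x t ^ 2 + pdx (tdiff h v) x t ^ 2

section Density

variable {u v : ℝ → ℝ → ℝ}

theorem continuous_diffDensity (hu : ContDiff ℝ ∞ (uncurry u)) (hv : ContDiff ℝ ∞ (uncurry v))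
    (h t : ℝ) : Continuous fun x => diffDensity h u v x t := by
  have hud := hu.uncurry_tdiff h
  have hvd := hv.uncurry_tdiff h
  have := hud.continuous.uncurry_right t
  have := hud.uncurry_pdx.continuous.uncurry_right t
  have := hud.uncurry_pdx.uncurry_pdx.continuous.uncurry_right t
  have := hud.uncurry_pdt.continuous.uncurry_right t
  have := hud.uncurry_pdt.uncurry_pdx.continuous.uncurry_right t
  have := hvd.uncurry_pdt.continuous.uncurry_right t
  have := hvd.uncurry_pdx.continuous.uncurry_right t
  simp only [diffDensity]
  fun_prop

theorem integral_diffDensity_eq (hu : ContDiff ℝ ∞ (uncurry u))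
    (hv : ContDiff ℝ ∞ (uncurry v)) (h t a b : ℝ) :
    ∫ x in a..b, diffDensity h u v x t =
      (∫ x in a..b, tdiff h u x t ^ 2) + (∫ x in a..b, pdx (tdiff h u) x t ^ 2)
        + (∫ x in a..b, pdx (pdx (tdiff h u)) x t ^ 2)
        + (∫ x in a..b, pdt (tdiff h u) x t ^ 2) + (∫ x in a..b, pdx (pdt (tdiff h u)) x t ^ 2)
        + (∫ x in a..b, pdt (tdiff h v) x t ^ 2) + (∫ x in a..b, pdx (tdiff h v) x t ^ 2) := by
  have hud := hu.uncurry_tdiff h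
  have hvd := hv.uncurry_tdiff h
  have := hud.continuous.uncurry_right t
  have := hud.uncurry_pdx.continuous.uncurry_right t
  have := hud.uncurry_pdx.uncurry_pdx.continuous.uncurry_right t
  have := hud.uncurry_pdt.continuous.uncurry_right t
  have := hud.uncurry_pdt.uncurry_pdx.continuous.uncurry_right t
  have := hvd.uncurry_pdt.continuous.uncurry_right t
  have := hvd.uncurry_pdx.continuous.uncurry_right t
  simp only [diffDensity]
  repeat rw [intervalIntegral.integral_add (Continuous.intervalIntegrable (by fun_prop) _ _)
    (Continuous.intervalIntegrable (by fun_prop) _ _)]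

end Density

noncomputable def energyConst (β₂ μ₂ lam₂ ρ₂ ℓ M : ℝ) : ℝ :=
  2 / β₂ + 2 / μ₂ + 2 / ρ₂ + 4 + 2 / lam₂ * (1 + 4 * ℓ ^ 2 * (1 + 2 * M ^ 2) + 16 * ℓ ^ 4)

noncomputable def weightConst (β₂ μ₂ ρ₂ ℓ T : ℝ) : ℝ :=
  (β₂ + ρ₂ + μ₂) * ℓ + β₂ * (T ^ 2 * ℓ + 1) + μ₂ * T ^ 2 * (T ^ 2 * ℓ + 2)

theorem integral_diffDensity_le_Ed {L₀ L β₂ μ₂ lam₂ ρ₂ h M t : ℝ} {u v : ℝ → ℝ → ℝ}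
    (hL : L₀ ≤ L) (hβ₂ : 0 < β₂) (hμ₂ : 0 < μ₂) (hlam₂ : 0 < lam₂) (hρ₂ : 0 < ρ₂)
    (hu : ContDiff ℝ ∞ (uncurry u)) (hv : ContDiff ℝ ∞ (uncurry v))
    (hux : ∀ x ∈ Icc L₀ L, |pdx u x (t + h) + pdx u x t| ≤ 2 * M)
    (h0 : tdiff h u L₀ t = 0) (h1 : pdx (tdiff h u) L₀ t = 0) :
    ∫ x in L₀..L, diffDensity h u v x t ≤
      energyConst β₂ μ₂ lam₂ ρ₂ (L - L₀) M * Ed β₂ μ₂ lam₂ ρ₂ L₀ L h u v t := by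
  have hud := hu.uncurry_tdiff h
  have hudx := hud.uncurry_pdx
  have hw := hudx.continuous.uncurry_right t
  have hw' := hudx.uncurry_pdx.continuous.uncurry_right t
  have hs := (hv.uncurry_tdiff h).uncurry_pdx.continuous.uncurry_right t
  have hm : Continuous fun x => pdx u x (t + h) + pdx u x t :=
    (hu.uncurry_pdx.continuous.uncurry_right (t + h)).add
      (hu.uncurry_pdx.continuous.uncurry_right t)
  set E := Ed β₂ μ₂ lam₂ ρ₂ L₀ L h u v t with hE
  have hsq : ∀ f : ℝ → ℝ, 0 ≤ ∫ x in L₀..L, f x ^ 2 :=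
    fun f => intervalIntegral.integral_nonneg hL fun x _ => sq_nonneg _
  have hp0 := mul_nonneg hβ₂.le (hsq fun x => pdt (tdiff h u) x t)
  have hq0 := mul_nonneg hμ₂.le (hsq fun x => pdx (pdt (tdiff h u)) x t)
  have hw'0 := mul_nonneg hlam₂.le (hsq fun x => pdx (pdx (tdiff h u)) x t)
  have hr0 := mul_nonneg hρ₂.le (hsq fun x => pdt (tdiff h v) x t)
  have hc0 := hsq fun x => pdx (tdiff h v) x t
    + 1 / 2 * pdx (tdiff h u) x t * (pdx u x (t + h) + pdx u x t)
  simp only [Ed] at hE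
  have hpE : ∫ x in L₀..L, pdt (tdiff h u) x t ^ 2 ≤ 2 / β₂ * E := by
    rw [div_mul_eq_mul_div, le_div_iff₀ hβ₂]; linarith
  have hqE : ∫ x in L₀..L, pdx (pdt (tdiff h u)) x t ^ 2 ≤ 2 / μ₂ * E := by
    rw [div_mul_eq_mul_div, le_div_iff₀ hμ₂]; linarith
  have hw'E : ∫ x in L₀..L, pdx (pdx (tdiff h u)) x t ^ 2 ≤ 2 / lam₂ * E := by
    rw [div_mul_eq_mul_div, le_div_iff₀ hlam₂]; linarith
  have hrE : ∫ x in L₀..L, pdt (tdiff h v) x t ^ 2 ≤ 2 / ρ₂ * E := by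
    rw [div_mul_eq_mul_div, le_div_iff₀ hρ₂]; linarith
  have hcE : ∫ x in L₀..L, (pdx (tdiff h v) x t
      + 1 / 2 * pdx (tdiff h u) x t * (pdx u x (t + h) + pdx u x t)) ^ 2 ≤ 2 * E := by
    linarith
  have hwE := integral_sq_le_of_hasDerivAt_of_left_eq_zero hL
    (fun x => hasDerivAt_pdx (hudx.differentiable (by simp)) x t) hw' h1
  have hzE := integral_sq_le_of_hasDerivAt_of_left_eq_zero hL
    (fun x => hasDerivAt_pdx (hud.differentiable (by simp)) x t) hw h0
  have hsE := integral_sq_le_two_mul_integral_sq_add hL hs hw hm hux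
  have hwE' := hwE.trans (mul_le_mul_of_nonneg_left hw'E (by positivity))
  have hzE' := hzE.trans (mul_le_mul_of_nonneg_left hwE' (by positivity))
  have hsE' := hsE.trans (add_le_add (mul_le_mul_of_nonneg_left hcE two_pos.le)
    (mul_le_mul_of_nonneg_left hwE' (by positivity)))
  rw [integral_diffDensity_eq hu hv, energyConst]
  linarith

theorem abs_mul_le_of_sq_add_sq_le {a b D : ℝ} (h : a ^ 2 + b ^ 2 ≤ D) : |a * b| ≤ D := by
  have := two_mul_le_add_sq |a| |b|
  rw [abs_mul]
  nlinarith [sq_abs a, sq_abs b, abs_nonneg a, abs_nonneg b]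

theorem abs_integral_mul_exp_mul_le {a b c B σ : ℝ} {F ψ w D : ℝ → ℝ} (hab : a ≤ b)
    (hD : Continuous D) (hF : ∀ x ∈ Icc a b, |F x| ≤ c * D x)
    (hw : ∀ x ∈ Icc a b, 0 ≤ w x ∧ w x ≤ B) (hψ : ∀ x ∈ Icc a b, ψ x ≤ σ) :
    |∫ x in a..b, F x * Real.exp (ψ x) * w x| ≤ c * B * Real.exp σ * ∫ x in a..b, D x := by
  rw [← intervalIntegral.integral_const_mul, ← Real.norm_eq_abs]
  refine intervalIntegral.norm_integral_le_of_norm_le hab (.of_forall fun x hx => ?_)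
    ((hD.intervalIntegrable (μ := volume) _ _).const_mul _)
  have hx : x ∈ Icc a b := Ioc_subset_Icc_self hx
  obtain ⟨hw0, hwB⟩ := hw x hx
  rw [Real.norm_eq_abs, abs_mul, abs_mul, abs_of_pos (Real.exp_pos _), abs_of_nonneg hw0]
  have hcD : 0 ≤ c * D x := (abs_nonneg _).trans (hF x hx)
  calc |F x| * Real.exp (ψ x) * w x ≤ c * D x * Real.exp σ * B := by
        gcongr
        exacts [hF x hx, hψ x hx]
    _ = c * B * Real.exp σ * D x := by ring

theorem phiW_le_of_endpoint {L₀ L T x t : ℝ} (hx : L₀ ≤ x) (ht : t = 0 ∨ t = T) :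
    phiW L₀ L T x t ≤ -((L - L₀) * T ^ 2 / 4) := by
  have hT2 : (t - T / 2) ^ 2 = T ^ 2 / 4 := by rcases ht with rfl | rfl <;> ring
  simp only [phiW, hT2]
  nlinarith [mul_nonneg (sub_nonneg.2 hx) (sq_nonneg T)]

theorem abs_add_mul_add_mul_add_mul_le {a b c d A B C D μ β k : ℝ} (hμ : 0 ≤ μ) (hβ : 0 ≤ β)
    (hk : 0 ≤ k) (ha : |a| ≤ A) (hb : |b| ≤ B) (hc : |c| ≤ C) (hd : |d| ≤ D) :
    |a + μ * b + β * c + k * d| ≤ A + μ * B + β * C + k * D := by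
  have hb' : |μ * b| ≤ μ * B := by rw [abs_mul, abs_of_nonneg hμ]; gcongr
  have hc' : |β * c| ≤ β * C := by rw [abs_mul, abs_of_nonneg hβ]; gcongr
  have hd' : |k * d| ≤ k * D := by rw [abs_mul, abs_of_nonneg hk]; gcongr
  linarith [abs_add_le (a + μ * b + β * c) (k * d), abs_add_le (a + μ * b) (β * c),
    abs_add_le a (μ * b)]

theorem abs_Hd_le {L₀ L β₂ μ₂ ρ₂ T h τ t : ℝ} {u v : ℝ → ℝ → ℝ}
    (hL : L₀ ≤ L) (hβ₂ : 0 < β₂) (hμ₂ : 0 < μ₂) (hρ₂ : 0 < ρ₂) (hτ : 1 ≤ τ)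
    (hu : ContDiff ℝ ∞ (uncurry u)) (hv : ContDiff ℝ ∞ (uncurry v)) (ht : t = 0 ∨ t = T) :
    |Hd β₂ μ₂ ρ₂ L₀ L T h τ u v t| ≤ weightConst β₂ μ₂ ρ₂ (L - L₀) T * τ ^ 2
      * Real.exp (-τ * ((L - L₀) * T ^ 2 / 4)) * ∫ x in L₀..L, diffDensity h u v x t := by
  have hD := continuous_diffDensity hu hv h t
  have hψ : ∀ x ∈ Icc L₀ L, τ * phiW L₀ L T x t ≤ -τ * ((L - L₀) * T ^ 2 / 4) := fun x hx => by
    nlinarith [phiW_le_of_endpoint (L := L) hx.1 ht]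
  have hτ0 : 0 ≤ τ := by linarith
  have hℓ : ∀ x ∈ Icc L₀ L, 0 ≤ L - x ∧ L - x ≤ L - L₀ := fun x hx =>
    ⟨sub_nonneg.2 hx.2, sub_le_sub_left hx.1 L⟩
  have hw : ∀ k : ℝ, 0 ≤ k → ∀ x ∈ Icc L₀ L,
      0 ≤ τ * T ^ 2 * (L - x) + k ∧ τ * T ^ 2 * (L - x) + k ≤ τ * (T ^ 2 * (L - L₀) + k) := by
    intro k hk x hx
    have := mul_le_mul_of_nonneg_left (hℓ x hx).2 (mul_nonneg hτ0 (sq_nonneg T))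
    constructor <;> nlinarith [mul_nonneg (mul_nonneg hτ0 (sq_nonneg T)) (hℓ x hx).1]
  unfold Hd
  refine (abs_add_mul_add_mul_add_mul_le hμ₂.le hβ₂.le (by positivity)
    (abs_integral_mul_exp_mul_le (c := β₂ + ρ₂) hL hD (fun x _ => ?_) hℓ hψ)
    (abs_integral_mul_exp_mul_le (c := 1) hL hD (fun x _ => ?_) hℓ hψ)
    (abs_integral_mul_exp_mul_le (c := 1) hL hD (fun x _ => ?_) (hw 1 zero_le_one) hψ)
    (abs_integral_mul_exp_mul_le (c := 1) hL hD (fun x _ => ?_) (hw 2 zero_le_two) hψ)).trans ?_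
  · have hpw : |pdt (tdiff h u) x t * pdx (tdiff h u) x t| ≤ diffDensity h u v x t :=
      abs_mul_le_of_sq_add_sq_le (by
        rw [← sub_nonneg]; simp only [diffDensity]; ring_nf; positivity)
    have hrs : |pdt (tdiff h v) x t * pdx (tdiff h v) x t| ≤ diffDensity h u v x t :=
      abs_mul_le_of_sq_add_sq_le (by
        rw [← sub_nonneg]; simp only [diffDensity]; ring_nf; positivity)
    rw [mul_assoc, mul_assoc]
    refine (abs_add_le _ _).trans ?_
    rw [abs_mul β₂, abs_mul ρ₂, abs_of_pos hβ₂, abs_of_pos hρ₂, add_mul]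
    gcongr
  · rw [one_mul]
    exact abs_mul_le_of_sq_add_sq_le (by
      rw [← sub_nonneg]; simp only [diffDensity]; ring_nf; positivity)
  · rw [abs_of_nonneg (sq_nonneg _), one_mul, ← sub_nonneg]
    simp only [diffDensity]; ring_nf; positivity
  · rw [one_mul]
    exact abs_mul_le_of_sq_add_sq_le (by
      rw [← sub_nonneg]; simp only [diffDensity]; ring_nf; positivity)
  · have hS : 0 ≤ ∫ x in L₀..L, diffDensity h u v x t :=
      intervalIntegral.integral_nonneg hL fun x _ => by simp only [diffDensity]; positivity
    have hX := mul_nonneg (Real.exp_pos (-τ * ((L - L₀) * T ^ 2 / 4))).le hS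
    have hℓ0 := sub_nonneg.2 hL
    have hA₀ : 0 ≤ (β₂ + ρ₂ + μ₂) * (L - L₀) := by positivity
    have hA₁ : 0 ≤ β₂ * (T ^ 2 * (L - L₀) + 1) := by positivity
    rw [weightConst]
    nlinarith [mul_le_mul_of_nonneg_right (one_le_pow₀ hτ (n := 2)) (mul_nonneg hA₀ hX),
      mul_le_mul_of_nonneg_right (le_self_pow₀ hτ two_ne_zero) (mul_nonneg hA₁ hX)]

theorem abs_Hd_le_Ed {L₀ L β₂ μ₂ lam₂ ρ₂ T h M τ t : ℝ} {u v : ℝ → ℝ → ℝ}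
    (hL : L₀ ≤ L) (hβ₂ : 0 < β₂) (hμ₂ : 0 < μ₂) (hlam₂ : 0 < lam₂) (hρ₂ : 0 < ρ₂)
    (hT : 0 ≤ T) (hh : 0 ≤ h) (hτ : 1 ≤ τ)
    (hu : ContDiff ℝ ∞ (uncurry u)) (hv : ContDiff ℝ ∞ (uncurry v))
    (hMu : MBounded M L₀ L (T + h) u) (ht : t = 0 ∨ t = T)
    (h0 : tdiff h u L₀ t = 0) (h1 : pdx (tdiff h u) L₀ t = 0) :
    |Hd β₂ μ₂ ρ₂ L₀ L T h τ u v t| ≤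
      weightConst β₂ μ₂ ρ₂ (L - L₀) T * energyConst β₂ μ₂ lam₂ ρ₂ (L - L₀) M
        * Ed β₂ μ₂ lam₂ ρ₂ L₀ L h u v t * τ ^ 2 * Real.exp (-τ * ((L - L₀) * T ^ 2 / 4)) := by
  have hth : t ∈ Icc 0 (T + h) ∧ t + h ∈ Icc 0 (T + h) := by
    rcases ht with rfl | rfl <;> refine ⟨⟨?_, ?_⟩, ⟨?_, ?_⟩⟩ <;> linarith
  have hux : ∀ x ∈ Icc L₀ L, |pdx u x (t + h) + pdx u x t| ≤ 2 * M := fun x hx => by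
    have hu' := hu.differentiable (by simp)
    linarith [abs_add_le (pdx u x (t + h)) (pdx u x t), hMu.abs_pdx_le hu' hx hth.1,
      hMu.abs_pdx_le hu' hx hth.2]
  calc |Hd β₂ μ₂ ρ₂ L₀ L T h τ u v t|
      ≤ weightConst β₂ μ₂ ρ₂ (L - L₀) T * τ ^ 2 * Real.exp (-τ * ((L - L₀) * T ^ 2 / 4))
          * ∫ x in L₀..L, diffDensity h u v x t :=
        abs_Hd_le hL hβ₂ hμ₂ hρ₂ hτ hu hv ht
    _ ≤ weightConst β₂ μ₂ ρ₂ (L - L₀) T * τ ^ 2 * Real.exp (-τ * ((L - L₀) * T ^ 2 / 4))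
          * (energyConst β₂ μ₂ lam₂ ρ₂ (L - L₀) M * Ed β₂ μ₂ lam₂ ρ₂ L₀ L h u v t) := by
        have hw : 0 ≤ weightConst β₂ μ₂ ρ₂ (L - L₀) T := by
          have := sub_nonneg.2 hL
          unfold weightConst; positivity
        gcongr
        exact integral_diffDensity_le_Ed hL hβ₂ hμ₂ hlam₂ hρ₂ hu hv hux h0 h1
    _ = _ := by ring

theorem stmt_18_general (L₀ L β₂ μ₂ lam₂ ρ₂ T h M : ℝ)
    (hL : L₀ < L)
    (hβ₂ : 0 < β₂) (hμ₂ : 0 < μ₂) (hlam₂ : 0 < lam₂) (hρ₂ : 0 < ρ₂)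
    (hT : 0 < T) (hh : 0 < h) :
    ∃ C₃ > (0:ℝ), ∀ u v : ℝ → ℝ → ℝ,
      (∀ n : ℕ, ContDiff ℝ n (Function.uncurry u)) →
      (∀ n : ℕ, ContDiff ℝ n (Function.uncurry v)) →
      VKBeam β₂ μ₂ lam₂ ρ₂ L₀ L (T + h) u v →
      MBounded M L₀ L (T + h) u → MBounded M L₀ L (T + h) v →
      (∀ t ∈ Set.Icc (0:ℝ) T,
        tdiff h u L₀ t = 0 ∧ pdx (tdiff h u) L₀ t = 0 ∧ tdiff h v L₀ t = 0) →
      ∀ τ : ℝ, 1 ≤ τ →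
        Hd β₂ μ₂ ρ₂ L₀ L T h τ u v 0 - Hd β₂ μ₂ ρ₂ L₀ L T h τ u v T ≥
          -C₃ * (Ed β₂ μ₂ lam₂ ρ₂ L₀ L h u v T + Ed β₂ μ₂ lam₂ ρ₂ L₀ L h u v 0)
            * τ ^ 2 * Real.exp (-τ * ((L - L₀) * T ^ 2 / 4)) := by
  have hℓ : 0 < L - L₀ := sub_pos.2 hL
  refine ⟨weightConst β₂ μ₂ ρ₂ (L - L₀) T * energyConst β₂ μ₂ lam₂ ρ₂ (L - L₀) M,
    by unfold weightConst energyConst; positivity,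
    fun u v hu hv _ hMu _ hbc τ hτ => ?_⟩
  have hu' := contDiff_infty.2 hu
  have hv' := contDiff_infty.2 hv
  obtain ⟨h00, h01, -⟩ := hbc 0 ⟨le_rfl, hT.le⟩
  obtain ⟨hT0, hT1, -⟩ := hbc T ⟨hT.le, le_rfl⟩
  have hb0 := abs_Hd_le_Ed hL.le hβ₂ hμ₂ hlam₂ hρ₂ hT.le hh.le hτ hu' hv' hMu (Or.inl rfl) h00 h01
  have hbT := abs_Hd_le_Ed hL.le hβ₂ hμ₂ hlam₂ hρ₂ hT.le hh.le hτ hu' hv' hMu (Or.inr rfl) hT0 hT1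
  linarith [neg_abs_le (Hd β₂ μ₂ ρ₂ L₀ L T h τ u v 0), le_abs_self (Hd β₂ μ₂ ρ₂ L₀ L T h τ u v T)]

/-- Estimate (79) of the paper: the boundary-in-time terms `H_d(0) − H_d(T)` of the
weighted multiplier identity are bounded below by `−C₃(E_d(T) + E_d(0))τ²e^{−τσ₀}`
with `σ₀ = (L − L₀)T²/4`. -/
theorem stmt_18 (L₀ L β₂ μ₂ lam₂ ρ₂ T h M : ℝ)
    (hL₀ : 0 < L₀) (hL : L₀ < L)
    (hβ₂ : 0 < β₂) (hμ₂ : 0 < μ₂) (hlam₂ : 0 < lam₂) (hρ₂ : 0 < ρ₂)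
    (hT : 0 < T) (hh : 0 < h) (hM : 0 < M) :
    ∃ C₃ > (0:ℝ), ∀ u v : ℝ → ℝ → ℝ,
      (∀ n : ℕ, ContDiff ℝ n (Function.uncurry u)) →
      (∀ n : ℕ, ContDiff ℝ n (Function.uncurry v)) →
      VKBeam β₂ μ₂ lam₂ ρ₂ L₀ L (T + h) u v →
      MBounded M L₀ L (T + h) u → MBounded M L₀ L (T + h) v →
      (∀ t ∈ Set.Icc (0:ℝ) T,
        tdiff h u L₀ t = 0 ∧ pdx (tdiff h u) L₀ t = 0 ∧ tdiff h v L₀ t = 0) →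
      ∀ τ : ℝ, 1 ≤ τ →
        Hd β₂ μ₂ ρ₂ L₀ L T h τ u v 0 - Hd β₂ μ₂ ρ₂ L₀ L T h τ u v T ≥
          -C₃ * (Ed β₂ μ₂ lam₂ ρ₂ L₀ L h u v T + Ed β₂ μ₂ lam₂ ρ₂ L₀ L h u v 0)
            * τ ^ 2 * Real.exp (-τ * ((L - L₀) * T ^ 2 / 4)) :=
  stmt_18_general L₀ L β₂ μ₂ lam₂ ρ₂ T h M hL hβ₂ hμ₂ hlam₂ hρ₂ hT hh
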